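/- One has −t*(3) + 2·t*(2,1) = 2·t(2)·log(2), where t*(3) = Σ_{m ≥ 1 odd} 1/m³, t(2) = Σ_{m ≥ 1 odd} 1/m² = π²/8, and t*(2,1) = Σ_{m₁ ≥ m₂ > 0, m₁, m₂ odd} 1/(m₁² m₂). -/

import Mathlib

/-- Multiple t-value of level `N` with residue `a`:
`t_{N,a}(k) = Σ_{m₁ > ⋯ > mₙ > 0, mᵢ ≡ a (mod N)} 1/(m₁^{k₁} ⋯ mₙ^{kₙ})`. -/
noncomputable def tv (N a : ℕ) (k : List ℕ) : ℝ :=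
  ∑' m : {f : Fin k.length → ℕ // StrictAnti f ∧ ∀ i, 0 < f i ∧ f i % N = a % N},
    ∏ i : Fin k.length, ((m.1 i : ℝ) ^ k.get i)⁻¹

/-- Multiple t-star value of level `N` with residue `a`:
`t*_{N,a}(k) = Σ_{m₁ ≥ ⋯ ≥ mₙ > 0, mᵢ ≡ a (mod N)} 1/(m₁^{k₁} ⋯ mₙ^{kₙ})`. -/
noncomputable def tsv (N a : ℕ) (k : List ℕ) : ℝ :=
  ∑' m : {f : Fin k.length → ℕ // Antitone f ∧ ∀ i, 0 < f i ∧ f i % N = a % N},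
    ∏ i : Fin k.length, ((m.1 i : ℝ) ^ k.get i)⁻¹

open Filter Topology Finset

/-!
Euler's partial-fraction method, applied to the double sums
`S(r, s) = ∑ 1 / (m n (m + n))` over `m ≡ r`, `n ≡ s (mod 2)`.
Along a row, `∑ₙ 1 / (n (m + n))` telescopes, up to the series
`log 2 = ∑ (1 / (2b + 1) - 1 / (2b + 2))`; along the antidiagonals `m + n = const`,
the decomposition `1 / (m n (m + n)) = 1 / (m (m + n)²) + 1 / (n (m + n)²)` produces partial sums
of the odd and even harmonic series. Diagonals against columns give `S(1,1) = 2 S(1,2)`;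
rows of `S(1,1)` and `S(1,2)` against the diagonals of `S(1,2)` give `S(1,1) = t(3)`; and the
rows of `S(1,2)` are `t*(2,1) - t(2) log 2`.
-/

section ResidueClass

variable {N a : ℕ}

lemma mul_div_add_of_mod_eq {m : ℕ} (h : m % N = a) : N * (m / N) + a = m := by
  rw [← h]
  exact Nat.div_add_mod m N

def finOneResidueEquiv (P : (Fin 1 → ℕ) → Prop) (hP : ∀ f, P f) (ha : 0 < a) (haN : a < N) :
    ℕ ≃ {f : Fin 1 → ℕ // P f ∧ ∀ i, 0 < f i ∧ f i % N = a % N} where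
  toFun n := ⟨fun _ => N * n + a, hP _,
    fun _ => ⟨ha.trans_le (Nat.le_add_left a _), Nat.mul_add_mod N n a⟩⟩
  invFun f := f.1 0 / N
  left_inv n := by simp [Nat.mul_add_div (by omega : 0 < N), Nat.div_eq_of_lt haN]
  right_inv f := Subtype.ext <| funext fun i => by
    rw [Fin.fin_one_eq_zero i]
    exact mul_div_add_of_mod_eq ((f.2.2 0).2.trans (Nat.mod_eq_of_lt haN))

def finTwoResidueEquiv (ha : 0 < a) (haN : a < N) :
    ℕ × ℕ ≃ {f : Fin 2 → ℕ // Antitone f ∧ ∀ i, 0 < f i ∧ f i % N = a % N} where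
  toFun p := ⟨![N * (p.1 + p.2) + a, N * p.1 + a],
    antitone_vecCons.2 ⟨by simp [Nat.mul_add], Subsingleton.antitone (α := Fin 1) _⟩,
    fun i => by
      fin_cases i <;> exact ⟨ha.trans_le (Nat.le_add_left a _), Nat.mul_add_mod _ _ _⟩⟩
  invFun f := (f.1 1 / N, f.1 0 / N - f.1 1 / N)
  left_inv p := by
    simp [Nat.mul_add_div (by omega : 0 < N), Nat.div_eq_of_lt haN]
  right_inv f := by
    have hres : ∀ i, f.1 i % N = a := fun i => (f.2.2 i).2.trans (Nat.mod_eq_of_lt haN)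
    have hle : f.1 1 / N ≤ f.1 0 / N := Nat.div_le_div_right (f.2.1 (Fin.zero_le 1))
    refine Subtype.ext <| funext fun i => ?_
    fin_cases i
    · simpa [Nat.add_sub_cancel' hle] using mul_div_add_of_mod_eq (hres 0)
    · simpa using mul_div_add_of_mod_eq (hres 1)

lemma tsum_finOneResidue (P : (Fin 1 → ℕ) → Prop) (hP : ∀ f, P f) (ha : 0 < a) (haN : a < N)
    (g : ℕ → ℝ) :
    ∑' m : {f : Fin 1 → ℕ // P f ∧ ∀ i, 0 < f i ∧ f i % N = a % N}, g (m.1 0) =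
      ∑' n : ℕ, g (N * n + a) :=
  ((finOneResidueEquiv P hP ha haN).tsum_eq _).symm

theorem tv_singleton (ha : 0 < a) (haN : a < N) (k : ℕ) :
    tv N a [k] = ∑' n : ℕ, (((N * n + a : ℕ) : ℝ) ^ k)⁻¹ :=
  (tsum_congr fun _ => Fin.prod_univ_one _).trans
    (tsum_finOneResidue StrictAnti Subsingleton.strictAnti ha haN fun m => ((m : ℝ) ^ k)⁻¹)

theorem tsv_singleton (ha : 0 < a) (haN : a < N) (k : ℕ) :
    tsv N a [k] = ∑' n : ℕ, (((N * n + a : ℕ) : ℝ) ^ k)⁻¹ :=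
  (tsum_congr fun _ => Fin.prod_univ_one _).trans
    (tsum_finOneResidue Antitone Subsingleton.antitone ha haN fun m => ((m : ℝ) ^ k)⁻¹)

theorem tsv_pair (ha : 0 < a) (haN : a < N) (k l : ℕ) :
    tsv N a [k, l] = ∑' p : ℕ × ℕ,
      (((N * (p.1 + p.2) + a : ℕ) : ℝ) ^ k)⁻¹ * (((N * p.1 + a : ℕ) : ℝ) ^ l)⁻¹ :=
  (tsum_congr fun _ => Fin.prod_univ_two _).trans ((finTwoResidueEquiv ha haN).tsum_eq
    fun f => (((f.1 0 : ℕ) : ℝ) ^ k)⁻¹ * (((f.1 1 : ℕ) : ℝ) ^ l)⁻¹).symm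

end ResidueClass

theorem Antitone.hasSum_sub_add {f : ℕ → ℝ} (hf : Antitone f) (hf0 : Tendsto f atTop (𝓝 0))
    (d : ℕ) : HasSum (fun n => f n - f (n + d)) (∑ i ∈ range d, f i) := by
  have step : ∀ i, HasSum (fun n => f (n + i) - f (n + 1 + i)) (f i) := fun i => by
    rw [hasSum_iff_tendsto_nat_of_nonneg fun n => sub_nonneg.2 (hf (by omega))]
    have partial_sum : ∀ m, ∑ n ∈ range m, (f (n + i) - f (n + 1 + i)) = f i - f (m + i) :=
      fun m => by simpa using Finset.sum_range_sub' (fun n => f (n + i)) m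
    simp only [partial_sum]
    simpa using (tendsto_const_nhds (x := f i)).sub (hf0.comp (tendsto_add_atTop_nat i))
  refine (hasSum_sum fun i _ => step i).congr_fun fun n => ?_
  have := Finset.sum_range_sub' (fun i => f (n + i)) d
  rw [add_zero] at this
  rw [← this]
  exact Finset.sum_congr rfl fun i _ => by ring_nf

noncomputable def apHarmonic (r : ℝ) (n : ℕ) : ℝ := ∑ i ∈ range n, (2 * i + r)⁻¹

theorem apHarmonic_zero (r : ℝ) : apHarmonic r 0 = 0 := sum_range_zero _

theorem hasSum_inv_sub_inv_add {r : ℝ} (hr : 0 < r) (d : ℕ) :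
    HasSum (fun n : ℕ => (2 * n + r)⁻¹ - (2 * (n + d) + r)⁻¹) (apHarmonic r d) := by
  have hf : Antitone fun n : ℕ => (2 * n + r : ℝ)⁻¹ := fun m n h => by
    dsimp only
    gcongr
  have hf0 : Tendsto (fun n : ℕ => (2 * n + r : ℝ)⁻¹) atTop (𝓝 0) :=
    tendsto_inv_atTop_zero.comp <| tendsto_atTop_add_const_right _ _ <|
      tendsto_natCast_atTop_atTop.const_mul_atTop two_pos
  simpa [apHarmonic] using hf.hasSum_sub_add hf0 d

theorem sum_range_inv_odd_sub_inv_even (n : ℕ) :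
    ∑ i ∈ range n, ((2 * i + 1 : ℝ)⁻¹ - (2 * i + 2 : ℝ)⁻¹) = harmonic (2 * n) - harmonic n := by
  induction n with
  | zero => simp
  | succ n ih =>
    rw [sum_range_succ, ih, show 2 * (n + 1) = 2 * n + 1 + 1 by ring]
    simp only [harmonic_succ]
    push_cast
    field_simp
    ring

theorem hasSum_log_two :
    HasSum (fun n : ℕ => (2 * n + 1 : ℝ)⁻¹ - (2 * n + 2 : ℝ)⁻¹) (Real.log 2) := by
  rw [hasSum_iff_tendsto_nat_of_nonneg fun n => sub_nonneg.2 (by gcongr; norm_num)]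
  simp_rw [sum_range_inv_odd_sub_inv_even]
  have h := (Real.tendsto_harmonic_sub_log.comp (tendsto_id.const_mul_atTop' two_pos)).sub
    Real.tendsto_harmonic_sub_log
  rw [sub_self] at h
  refine Tendsto.congr' ?_ (by simpa using h.add_const (Real.log 2))
  filter_upwards [eventually_ne_atTop 0] with n hn
  simp [Real.log_mul two_ne_zero (Nat.cast_ne_zero.2 hn)]
  ring

theorem hasSum_antidiagonal_iff {F : ℕ → ℕ → ℝ} (hF : ∀ i n, 0 ≤ F i n) {t : ℝ} :
    HasSum (fun p : ℕ × ℕ => F p.1 (p.1 + p.2)) t ↔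
      HasSum (fun n => ∑ i ∈ range (n + 1), F i n) t := by
  have fiber : ∀ n, HasSum (fun x : antidiagonal n => F x.1.1 (x.1.1 + x.1.2))
      (∑ i ∈ range (n + 1), F i n) := fun n => by
    convert hasSum_fintype _
    rw [Finset.sum_coe_sort (antidiagonal n) fun x => F x.1 (x.1 + x.2),
      ← Finset.Nat.sum_antidiagonal_eq_sum_range_succ fun i _ => F i n]
    exact sum_congr rfl fun x hx => by rw [HasAntidiagonal.mem_antidiagonal.1 hx]
  rw [← Finset.HasAntidiagonal.sigmaAntidiagonalEquivProd.hasSum_iff]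
  refine ⟨fun h => h.sigma fiber, fun h => ?_⟩
  have hsum : Summable fun x : (n : ℕ) × antidiagonal n => F x.2.1.1 (x.2.1.1 + x.2.1.2) :=
    (summable_sigma_of_nonneg fun _ => hF _ _).2
      ⟨fun n => (fiber n).summable, h.summable.congr fun n => ((fiber n).tsum_eq).symm⟩
  exact (hsum.hasSum.sigma fiber).unique h ▸ hsum.hasSum

section Tornheim

variable {x y r s : ℝ}

theorem inv_mul_mul_add_eq_inv_sq_mul_sub (hx : x ≠ 0) (hy : y ≠ 0) (hxy : x + y ≠ 0) :
    (x * y * (x + y))⁻¹ = (x ^ 2)⁻¹ * (y⁻¹ - (x + y)⁻¹) := by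
  field_simp
  ring

theorem inv_mul_mul_add_eq_add (hx : x ≠ 0) (hy : y ≠ 0) (hxy : x + y ≠ 0) :
    (x * y * (x + y))⁻¹ = (x * (x + y) ^ 2)⁻¹ + (y * (x + y) ^ 2)⁻¹ := by
  field_simp
  ring

theorem inv_mul_mul_add_le_rpow (hx : 0 < x) (hy : 0 < y) :
    (x * y * (x + y))⁻¹ ≤ (x ^ (3 / 2 : ℝ))⁻¹ * (y ^ (3 / 2 : ℝ))⁻¹ := by
  rw [← mul_inv, ← Real.mul_rpow hx.le hy.le, show (3 / 2 : ℝ) = 1 + 1 / 2 by norm_num,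
    Real.rpow_add (by positivity), Real.rpow_one, ← Real.sqrt_eq_rpow]
  gcongr
  rw [Real.sqrt_le_left (by positivity)]
  nlinarith [sq_nonneg (x - y)]

/-- `S(r, s) = ∑' p, tornheimTerm r s p`, indexing `m = 2a + r` and `n = 2b + s` by `p = (a, b)`. -/
noncomputable def tornheimTerm (r s : ℝ) (p : ℕ × ℕ) : ℝ :=
  ((2 * p.1 + r) * (2 * p.2 + s) * (2 * p.1 + r + (2 * p.2 + s)))⁻¹

theorem tornheimTerm_swap (p : ℕ × ℕ) : tornheimTerm r s p.swap = tornheimTerm s r p := by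
  simp only [tornheimTerm, Prod.fst_swap, Prod.snd_swap]
  ring

theorem tsum_tornheimTerm_comm (r s : ℝ) :
    ∑' p, tornheimTerm s r p = ∑' p, tornheimTerm r s p :=
  ((Equiv.prodComm ℕ ℕ).tsum_eq _).symm.trans (tsum_congr tornheimTerm_swap)

theorem summable_tornheimTerm (hr : 1 ≤ r) (hs : 1 ≤ s) : Summable (tornheimTerm r s) := by
  have h32 : Summable fun n : ℕ => (((n : ℝ) + 1) ^ (3 / 2 : ℝ))⁻¹ := by
    simpa using (summable_nat_add_iff 1).2 (Real.summable_nat_rpow_inv.2 (by norm_num))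
  refine .of_nonneg_of_le (fun p => by unfold tornheimTerm; positivity) (fun p => ?_)
    (h32.mul_of_nonneg h32 (fun _ => by positivity) fun _ => by positivity)
  have ha : (p.1 : ℝ) + 1 ≤ 2 * p.1 + r := by linarith [p.1.cast_nonneg (α := ℝ)]
  have hb : (p.2 : ℝ) + 1 ≤ 2 * p.2 + s := by linarith [p.2.cast_nonneg (α := ℝ)]
  calc tornheimTerm r s p ≤ ((2 * p.1 + r) ^ (3 / 2 : ℝ))⁻¹ * ((2 * p.2 + s) ^ (3 / 2 : ℝ))⁻¹ :=
        inv_mul_mul_add_le_rpow (by positivity) (by positivity)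
    _ ≤ _ := by gcongr

theorem hasSum_tornheimTerm_of_rows (hr : 1 ≤ r) (hs : 1 ≤ s) {g : ℕ → ℝ}
    (hg : ∀ a : ℕ, HasSum (fun b : ℕ => (2 * b + s)⁻¹ - (2 * a + r + (2 * b + s))⁻¹) (g a)) :
    HasSum (fun a : ℕ => ((2 * a + r) ^ 2)⁻¹ * g a) (∑' p, tornheimTerm r s p) :=
  (summable_tornheimTerm hr hs).hasSum.prod_fiberwise fun a => ((hg a).mul_left _).congr_fun
    fun _ => inv_mul_mul_add_eq_inv_sq_mul_sub (by positivity) (by positivity) (by positivity)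

theorem hasSum_mul_apHarmonic_of_hasSum {u v t : ℝ} (hu : 0 < u) (hv : 0 < v)
    (h : HasSum (fun p : ℕ × ℕ => ((2 * p.1 + u) * (2 * (p.1 + p.2 : ℕ) + v) ^ 2)⁻¹) t) :
    HasSum (fun n : ℕ => ((2 * n + v) ^ 2)⁻¹ * apHarmonic u (n + 1)) t :=
  ((hasSum_antidiagonal_iff (F := fun i n => ((2 * i + u) * (2 * n + v) ^ 2 : ℝ)⁻¹)
    (fun _ _ => by positivity)).1 h).congr_fun fun n => by
    rw [apHarmonic, mul_sum]
    exact sum_congr rfl fun i _ => by rw [mul_inv, mul_comm]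

theorem hasSum_tornheimTerm_diag (hr : 1 ≤ r) (hs : 1 ≤ s) :
    HasSum (fun n : ℕ => ((2 * n + (r + s)) ^ 2)⁻¹ * (apHarmonic r (n + 1) + apHarmonic s (n + 1)))
      (∑' p, tornheimTerm r s p) := by
  have split : ∀ p : ℕ × ℕ, tornheimTerm r s p =
      ((2 * p.1 + r) * (2 * (p.1 + p.2 : ℕ) + (r + s)) ^ 2)⁻¹ +
        ((2 * p.2 + s) * (2 * (p.2 + p.1 : ℕ) + (r + s)) ^ 2)⁻¹ := fun p => by
    rw [tornheimTerm, inv_mul_mul_add_eq_add (by positivity) (by positivity) (by positivity)]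
    push_cast
    ring_nf
  have h₁ : Summable fun p : ℕ × ℕ => ((2 * p.1 + r) * (2 * (p.1 + p.2 : ℕ) + (r + s)) ^ 2)⁻¹ :=
    (summable_tornheimTerm hr hs).of_nonneg_of_le (fun _ => by positivity)
      fun p => split p ▸ le_add_of_nonneg_right (by positivity)
  have h₂ : Summable fun p : ℕ × ℕ => ((2 * p.2 + s) * (2 * (p.2 + p.1 : ℕ) + (r + s)) ^ 2)⁻¹ :=
    (summable_tornheimTerm hr hs).of_nonneg_of_le (fun _ => by positivity)
      fun p => split p ▸ le_add_of_nonneg_left (by positivity)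
  have h₂' : Summable fun p : ℕ × ℕ => ((2 * p.1 + s) * (2 * (p.1 + p.2 : ℕ) + (r + s)) ^ 2)⁻¹ :=
    (Equiv.prodComm ℕ ℕ).summable_iff.2 h₂
  have hval : ∑' p, tornheimTerm r s p =
      ∑' p : ℕ × ℕ, ((2 * p.1 + r) * (2 * (p.1 + p.2 : ℕ) + (r + s)) ^ 2)⁻¹ +
        ∑' p : ℕ × ℕ, ((2 * p.1 + s) * (2 * (p.1 + p.2 : ℕ) + (r + s)) ^ 2)⁻¹ := by
    rw [tsum_congr split, h₁.tsum_add h₂]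
    exact congrArg _ ((Equiv.prodComm ℕ ℕ).tsum_eq _).symm
  rw [hval]
  exact ((hasSum_mul_apHarmonic_of_hasSum (by positivity) (by positivity) h₁.hasSum).add
    (hasSum_mul_apHarmonic_of_hasSum (by positivity) (by positivity) h₂'.hasSum)).congr_fun
    fun n => mul_add _ _ _

end Tornheim

theorem hasSum_tv_two_one_singleton {k : ℕ} (hk : 2 ≤ k) :
    HasSum (fun n : ℕ => ((2 * n + 1 : ℝ) ^ k)⁻¹) (tv 2 1 [k]) := by
  rw [tv_singleton one_pos one_lt_two]
  push_cast
  refine Summable.hasSum <| .of_nonneg_of_le (fun _ => by positivity) (fun n => ?_)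
    ((summable_nat_add_iff 1).2 (Real.summable_nat_pow_inv.2 hk))
  push_cast
  gcongr
  linarith [n.cast_nonneg (α := ℝ)]

theorem hasSum_row_odd_odd (a : ℕ) :
    HasSum (fun b : ℕ => (2 * b + 1 : ℝ)⁻¹ - (2 * a + 1 + (2 * b + 1) : ℝ)⁻¹)
      (Real.log 2 + apHarmonic 2 a) :=
  (hasSum_log_two.add (hasSum_inv_sub_inv_add two_pos a)).congr_fun fun b => by ring_nf

theorem hasSum_row_odd_even (a : ℕ) :
    HasSum (fun b : ℕ => (2 * b + 2 : ℝ)⁻¹ - (2 * a + 1 + (2 * b + 2) : ℝ)⁻¹)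
      (apHarmonic 1 (a + 1) - Real.log 2) :=
  ((hasSum_inv_sub_inv_add one_pos (a + 1)).sub hasSum_log_two).congr_fun fun b => by
    push_cast
    ring_nf

theorem hasSum_row_even_odd (a : ℕ) :
    HasSum (fun b : ℕ => (2 * b + 1 : ℝ)⁻¹ - (2 * a + 2 + (2 * b + 1) : ℝ)⁻¹)
      (apHarmonic 1 (a + 1)) :=
  (hasSum_inv_sub_inv_add one_pos (a + 1)).congr_fun fun b => by
    push_cast
    ring_nf

theorem tsum_tornheimTerm_one_one_eq_two_mul :
    ∑' p, tornheimTerm 1 1 p = 2 * ∑' p, tornheimTerm 1 2 p := by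
  have hdiag := hasSum_tornheimTerm_diag (r := 1) (s := 1) le_rfl le_rfl
  have hcols := hasSum_tornheimTerm_of_rows one_le_two le_rfl hasSum_row_even_odd
  rw [tsum_tornheimTerm_comm] at hcols
  exact hdiag.unique ((hcols.mul_left 2).congr_fun fun n => by ring_nf)

theorem tsum_tornheimTerm_one_one : ∑' p, tornheimTerm 1 1 p = tv 2 1 [3] := by
  have hrows₁₁ := hasSum_tornheimTerm_of_rows le_rfl le_rfl hasSum_row_odd_odd
  have hrows₁₂ := hasSum_tornheimTerm_of_rows le_rfl one_le_two hasSum_row_odd_even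
  have hdiag₁₂ : HasSum (fun n : ℕ => ((2 * n + 1 : ℝ) ^ 2)⁻¹ * (apHarmonic 1 n + apHarmonic 2 n))
      (∑' p, tornheimTerm 1 2 p) := by
    refine (hasSum_nat_add_iff' 1).1 ?_
    simp only [sum_range_one, apHarmonic_zero, add_zero, mul_zero, sub_zero]
    refine (hasSum_tornheimTerm_diag le_rfl one_le_two).congr_fun fun n => ?_
    push_cast
    ring_nf
  -- `apHarmonic 1 (n + 1) = apHarmonic 1 n + 1 / (2n + 1)` makes the rows of `S(1,2)` termwise
  -- the diagonals of `S(1,2)`, minus the rows of `S(1,1)`, plus the terms of `t(3)`.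
  have hcompare := hrows₁₂.unique (((hdiag₁₂.sub hrows₁₁).add
    (hasSum_tv_two_one_singleton (k := 3) (by norm_num))).congr_fun fun n => by
      simp only [apHarmonic, sum_range_succ]
      field_simp
      ring)
  linarith

theorem tsum_tornheimTerm_one_two : ∑' p, tornheimTerm 1 2 p = tv 2 1 [3] / 2 := by
  linarith [tsum_tornheimTerm_one_one, tsum_tornheimTerm_one_one_eq_two_mul]

theorem tsv_two_one_eq : tsv 2 1 [2, 1] = ∑' p, tornheimTerm 1 2 p + Real.log 2 * tv 2 1 [2] := by
  have hrows := (hasSum_tornheimTerm_of_rows le_rfl one_le_two hasSum_row_odd_even).add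
    ((hasSum_tv_two_one_singleton le_rfl).mul_left (Real.log 2))
  calc tsv 2 1 [2, 1]
      = ∑' p : ℕ × ℕ, ((2 * ((p.1 + p.2 : ℕ) : ℝ) + 1) ^ 2)⁻¹ * (2 * p.1 + 1 : ℝ)⁻¹ := by
        rw [tsv_pair one_pos one_lt_two]
        push_cast
        simp only [pow_one]
    _ = _ := ((hasSum_antidiagonal_iff
        (F := fun i n => ((2 * n + 1 : ℝ) ^ 2)⁻¹ * (2 * i + 1 : ℝ)⁻¹) (fun _ _ => by positivity)).2
        (hrows.congr_fun fun n => by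
          rw [← mul_sum]
          simp only [apHarmonic]
          ring)).tsum_eq

/-- Weighted sum formula in weight 3 for multiple t-star values:
`-t*(3) + 2t*(2,1) = 2t(2)log 2`. -/
theorem stmt10 : -tsv 2 1 [3] + 2 * tsv 2 1 [2, 1] = 2 * tv 2 1 [2] * Real.log 2 := by
  rw [tsv_two_one_eq, tsum_tornheimTerm_one_two, tsv_singleton one_pos one_lt_two,
    ← tv_singleton one_pos one_lt_two]
  ring
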